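/- arXiv:2001.02116 — 3 statements merged into one kernel-verified Lean document; each statement's English description precedes it below -/
import Mathlib

section
/- Let M be a d×d Metzler matrix that is Hurwitz stable. Then (−1)^d det(M) > 0, and the vector vᵀ = (−1)^{d+1} 𝟙ᵀ adj(M) (where adj denotes the adjugate matrix) is strictly positive and satisfies vᵀM = 𝟙ᵀ(−1)^d det(M)·(−1) < 0, i.e., vᵀM = −(−1)^d det(M) 𝟙ᵀ < 0 componentwise. -/
open Matrix

/-- A square real matrix is Metzler if all its off-diagonal entries are nonnegative. -/
def IsMetzler {d : ℕ} (M : Matrix (Fin d) (Fin d) ℝ) : Prop :=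
  ∀ i j, i ≠ j → 0 ≤ M i j

/-- A square real matrix is Hurwitz stable if every (complex) eigenvalue has
negative real part. -/
def IsHurwitz {d : ℕ} (M : Matrix (Fin d) (Fin d) ℝ) : Prop :=
  ∀ z ∈ spectrum ℂ (M.map (Complex.ofReal)), z.re < 0

/-!
Shifting a Metzler matrix `M` by a multiple of the identity makes it entrywise nonnegative, so
the resolvent `(t • 1 - M)⁻¹` is a nonnegative Neumann series for large `t`. Hurwitz stability
keeps `t • 1 - M` invertible for all `t ≥ 0`, and the factorisation
`(t - h) • 1 - M = (t • 1 - M) * (1 - h • (t • 1 - M)⁻¹)` carries nonnegativity of the resolvent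
down to `t = 0` by a continuity argument: `(-M)⁻¹ ≥ 0`. The characteristic polynomial has no root
in `[0, ∞)`, so `(-1) ^ d * det M = χ_M(0) > 0`. Finally `w = 𝟙ᵀ (-M)⁻¹ ≥ 0` satisfies
`wᵀ M = -𝟙ᵀ`, which for a Metzler `M` forces `w > 0`, and the adjugate vector is
`((-1) ^ d * det M) • w`.
-/

open Polynomial Set Filter Topology

attribute [local instance] Matrix.linftyOpNormedRing Matrix.linftyOpNormedAlgebra

namespace Matrix

variable {m n R : Type*}

def IsNonneg [Zero R] [LE R] (A : Matrix m n R) : Prop := ∀ i j, 0 ≤ A i j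

theorem isClosed_setOf_isNonneg [TopologicalSpace R] [Zero R] [Preorder R]
    [OrderClosedTopology R] : IsClosed {A : Matrix m n R | A.IsNonneg} := by
  simp only [IsNonneg, Set.ofPred_forall]
  exact isClosed_iInter fun i => isClosed_iInter fun j =>
    isClosed_le continuous_const ((continuous_apply j).comp (continuous_apply i))

variable [Fintype n]

section OrderedSemiring

variable [Semiring R] [PartialOrder R] [IsOrderedRing R] {A B : Matrix n n R}

theorem IsNonneg.vecMul_nonneg (hA : A.IsNonneg) {v : n → R} (hv : ∀ i, 0 ≤ v i) (j : n) :
    0 ≤ (v ᵥ* A) j :=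
  Finset.sum_nonneg fun i _ => mul_nonneg (hv i) (hA i j)

theorem IsNonneg.mul (hA : A.IsNonneg) (hB : B.IsNonneg) : (A * B).IsNonneg :=
  fun i j => Finset.sum_nonneg fun k _ => mul_nonneg (hA i k) (hB k j)

theorem IsNonneg.pow [DecidableEq n] (hA : A.IsNonneg) (k : ℕ) : (A ^ k).IsNonneg := by
  induction k with
  | zero => intro i j; rw [pow_zero, one_apply]; split_ifs <;> simp
  | succ k ih => rw [pow_succ]; exact ih.mul hA

end OrderedSemiring

variable [DecidableEq n]

theorem adjugate_eq_det_smul_inv [CommRing R] {A : Matrix n n R} (h : IsUnit A.det) :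
    A.adjugate = A.det • A⁻¹ := by
  rw [nonsing_inv_apply _ h, smul_smul, h.mul_val_inv, one_smul]

theorem inv_neg_of_isUnit_det [CommRing R] {A : Matrix n n R} (h : IsUnit A.det) :
    (-A)⁻¹ = -A⁻¹ :=
  inv_eq_right_inv (by rw [neg_mul_neg, mul_nonsing_inv _ h])

theorem IsNonneg.inv_one_sub {A : Matrix n n ℝ} (hA : A.IsNonneg) (h : ‖A‖ < 1) :
    (1 - A)⁻¹.IsNonneg := by
  intro i j
  have hs := (summable_geometric_of_norm_lt_one h).hasSum
  rw [nonsing_inv_eq_ringInverse, ← geom_series_eq_inverse A h]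
  exact (Pi.hasSum.mp (Pi.hasSum.mp hs i) j).nonneg fun k => hA.pow k i j

theorem IsNonneg.inv_smul_one_sub {A : Matrix n n ℝ} (hA : A.IsNonneg) {c : ℝ} (hc : ‖A‖ < c) :
    (c • 1 - A)⁻¹.IsNonneg := by
  have hc0 : 0 < c := (norm_nonneg A).trans_lt hc
  have hnorm : ‖c⁻¹ • A‖ < 1 := by
    rwa [norm_smul, norm_inv, Real.norm_of_nonneg hc0.le, inv_mul_lt_one₀ hc0]
  have hfac : c • 1 - A = c • (1 - c⁻¹ • A) := by
    rw [smul_sub, smul_smul, mul_inv_cancel₀ hc0.ne', one_smul]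
  have := invertibleOfNonzero hc0.ne'
  have hinv := inv_smul c (A := 1 - c⁻¹ • A)
    ((isUnit_iff_isUnit_det _).mp (isUnit_one_sub_of_norm_lt_one hnorm))
  rw [hfac, hinv, invOf_eq_inv]
  have hsmul : (c⁻¹ • A).IsNonneg := fun i j => mul_nonneg (inv_nonneg.mpr hc0.le) (hA i j)
  exact fun i j => mul_nonneg (inv_nonneg.mpr hc0.le) (hsmul.inv_one_sub hnorm i j)

theorem IsNonneg.inv_sub_smul_one {X : Matrix n n ℝ} (hX : IsUnit X) (hXinv : X⁻¹.IsNonneg)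
    {h : ℝ} (h0 : 0 ≤ h) (hh : h * ‖X⁻¹‖ < 1) : (X - h • 1)⁻¹.IsNonneg := by
  have hfac : X - h • 1 = X * (1 - h • X⁻¹) := by
    rw [mul_sub, mul_one, mul_smul_comm, mul_nonsing_inv X ((isUnit_iff_isUnit_det X).mp hX)]
  rw [hfac, mul_inv_rev]
  refine IsNonneg.mul (IsNonneg.inv_one_sub (fun i j => mul_nonneg h0 (hXinv i j)) ?_) hXinv
  rwa [norm_smul, Real.norm_of_nonneg h0]

theorem isNonneg_inv_neg_of_isNonneg_inv_smul_one_sub {M : Matrix n n ℝ} {T : ℝ} (hT0 : 0 ≤ T)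
    (hT : (T • 1 - M)⁻¹.IsNonneg) (hdet : ∀ t ∈ Icc 0 T, (t • 1 - M).det ≠ 0) :
    (-M)⁻¹.IsNonneg := by
  set R : ℝ → Matrix n n ℝ := fun x => ((T - x) • 1 - M)⁻¹ with hR
  have hdet' : ∀ x ∈ Icc 0 T, ((T - x) • 1 - M).det ≠ 0 := fun x hx =>
    hdet _ ⟨sub_nonneg.mpr hx.2, sub_le_self T hx.1⟩
  have hcont : ContinuousOn R (Icc 0 T) := fun x hx =>
    ((continuousAt_matrix_inv _ (by
      rw [Ring.inverse_eq_inv']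
      exact continuousAt_inv₀ (hdet' x hx))).comp (by fun_prop)).continuousWithinAt
  have hsub : Icc 0 T ⊆ {x | (R x).IsNonneg} := by
    refine IsClosed.Icc_subset_of_forall_mem_nhdsWithin ?_ (by simpa [hR] using hT) ?_
    · rw [inter_comm]
      exact hcont.preimage_isClosed_of_isClosed isClosed_Icc isClosed_setOf_isNonneg
    rintro x ⟨hxR, hx0, hxT⟩
    refine mem_of_superset (Ioo_mem_nhdsGT (lt_add_of_pos_right x
      (inv_pos.mpr (add_pos_of_nonneg_of_pos (norm_nonneg (R x)) one_pos)))) ?_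
    rintro y ⟨hxy, hy⟩
    have hshift : (T - y) • (1 : Matrix n n ℝ) - M = ((T - x) • 1 - M) - (y - x) • 1 := by
      module
    have hstep : (y - x) * ‖R x‖ < 1 := by
      have hρ : (‖R x‖ + 1)⁻¹ * (‖R x‖ + 1) = 1 := inv_mul_cancel₀ (by positivity)
      nlinarith [norm_nonneg (R x)]
    show ((T - y) • 1 - M)⁻¹.IsNonneg
    rw [hshift]
    exact IsNonneg.inv_sub_smul_one
      ((isUnit_iff_isUnit_det _).mpr (isUnit_iff_ne_zero.mpr (hdet' x ⟨hx0, hxT.le⟩))) hxR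
      (sub_nonneg.mpr hxy.le) hstep
  simpa [hR] using hsub ⟨hT0, le_rfl⟩

end Matrix

section MetzlerHurwitz

variable {d : ℕ} {M : Matrix (Fin d) (Fin d) ℝ}

theorem IsMetzler.isNonneg_add_smul_one (hM : IsMetzler M) :
    (M + (∑ i, |M i i|) • 1).IsNonneg := by
  intro i j
  rcases eq_or_ne i j with rfl | hij
  · have hii : |M i i| ≤ ∑ k, |M k k| :=
      Finset.single_le_sum (f := fun k => |M k k|) (fun k _ => abs_nonneg _) (Finset.mem_univ i)
    simp only [Matrix.add_apply, Matrix.smul_apply, one_apply_eq, smul_eq_mul, mul_one]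
    linarith [neg_abs_le (M i i)]
  · simpa [one_apply_ne hij] using hM i j hij

theorem IsMetzler.exists_isNonneg_inv_smul_one_sub (hM : IsMetzler M) :
    ∃ T : ℝ, 0 ≤ T ∧ (T • 1 - M)⁻¹.IsNonneg := by
  set s := ∑ i, |M i i|
  set A := M + s • 1
  have hs : 0 ≤ s := Finset.sum_nonneg fun i _ => abs_nonneg _
  refine ⟨‖A‖ + 1, by positivity, ?_⟩
  have hshift : (‖A‖ + 1) • 1 - M = (‖A‖ + 1 + s) • 1 - A := by
    simp only [A]
    module
  rw [hshift]
  exact hM.isNonneg_add_smul_one.inv_smul_one_sub (by linarith)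

theorem IsMetzler.pos_of_vecMul_neg (hM : IsMetzler M) {w : Fin d → ℝ} (hw : ∀ i, 0 ≤ w i)
    {j : Fin d} (hj : (w ᵥ* M) j < 0) : 0 < w j := by
  refine (hw j).lt_of_ne fun hwj => hj.not_ge ?_
  rw [vecMul, dotProduct]
  refine Finset.sum_nonneg fun i _ => ?_
  rcases eq_or_ne i j with rfl | hij
  · simp [← hwj]
  · exact mul_nonneg (hw i) (hM i j hij)

theorem IsHurwitz.lt_zero_of_isRoot_charpoly (hH : IsHurwitz M) {t : ℝ}
    (ht : M.charpoly.IsRoot t) : t < 0 := by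
  have hspec : (t : ℂ) ∈ spectrum ℂ (M.map Complex.ofReal) := by
    rw [mem_spectrum_iff_isRoot_charpoly]
    exact (charpoly_map M Complex.ofRealHom) ▸ ht.map
  simpa using hH _ hspec

theorem IsHurwitz.det_smul_one_sub_ne_zero (hH : IsHurwitz M) {t : ℝ} (ht : 0 ≤ t) :
    (t • 1 - M).det ≠ 0 := by
  intro h
  have := hH.lt_zero_of_isRoot_charpoly (t := t)
    (by rwa [IsRoot, eval_charpoly, scalar_apply, ← smul_one_eq_diagonal])
  linarith

theorem IsHurwitz.neg_one_pow_mul_det_pos (hH : IsHurwitz M) : 0 < (-1 : ℝ) ^ d * M.det := by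
  have := zero_lt_eval_of_roots_lt_of_leadingCoeff_nonneg
    (fun y hy => hH.lt_zero_of_isRoot_charpoly hy) (M.charpoly_monic.leadingCoeff ▸ zero_le_one)
  rwa [eval_charpoly, map_zero, zero_sub, det_neg, Fintype.card_fin] at this

end MetzlerHurwitz

theorem metzler_hurwitz_adjugate_vector {d : ℕ}
    (M : Matrix (Fin d) (Fin d) ℝ) (hM : IsMetzler M) (hH : IsHurwitz M) :
    0 < (-1 : ℝ) ^ d * M.det ∧
    (∀ j, 0 < ((-1 : ℝ) ^ (d + 1) • ((fun _ => (1 : ℝ)) ᵥ* M.adjugate)) j) ∧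
    (((-1 : ℝ) ^ (d + 1) • ((fun _ => (1 : ℝ)) ᵥ* M.adjugate)) ᵥ* M
        = fun _ => -((-1 : ℝ) ^ d * M.det)) ∧
    (∀ j, ((((-1 : ℝ) ^ (d + 1) • ((fun _ => (1 : ℝ)) ᵥ* M.adjugate)) ᵥ* M) j) < 0) := by
  have hdet := hH.neg_one_pow_mul_det_pos
  have hunit : IsUnit M.det := isUnit_iff_ne_zero.mpr fun h => by simp [h] at hdet
  obtain ⟨T, hT0, hT⟩ := hM.exists_isNonneg_inv_smul_one_sub
  have hW : (-M)⁻¹.IsNonneg := isNonneg_inv_neg_of_isNonneg_inv_smul_one_sub hT0 hT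
    fun t ht => hH.det_smul_one_sub_ne_zero ht.1
  set w := (fun _ => (1 : ℝ)) ᵥ* (-M)⁻¹
  have hwM : w ᵥ* M = fun _ => -1 := by
    rw [vecMul_vecMul, inv_neg_of_isUnit_det hunit, neg_mul, nonsing_inv_mul _ hunit,
      vecMul_neg, vecMul_one]
    rfl
  have hw : ∀ j, 0 < w j := fun j =>
    hM.pos_of_vecMul_neg (hW.vecMul_nonneg fun _ => zero_le_one) (by rw [hwM]; norm_num)
  have hv : (-1 : ℝ) ^ (d + 1) • ((fun _ => (1 : ℝ)) ᵥ* M.adjugate) = ((-1) ^ d * M.det) • w := by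
    rw [adjugate_eq_det_smul_inv hunit, ← neg_neg M⁻¹, ← inv_neg_of_isUnit_det hunit,
      vecMul_smul, vecMul_neg, smul_neg, ← neg_smul, smul_smul, pow_succ]
    congr 1
    ring
  have hvM : ((-1 : ℝ) ^ (d + 1) • ((fun _ => (1 : ℝ)) ᵥ* M.adjugate)) ᵥ* M
      = fun _ => -((-1 : ℝ) ^ d * M.det) := by
    rw [hv, smul_vecMul, hwM]
    ext j
    simp
  refine ⟨hdet, fun j => ?_, hvM, fun j => ?_⟩
  · rw [hv, Pi.smul_apply, smul_eq_mul]
    exact mul_pos hdet (hw j)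
  · simpa [hvM] using hdet
end

section
/- Let Σ be a d×d Metzler sign pattern (off-diagonal signs nonnegative). Then all matrices in the qualitative class 𝒬(Σ) are Hurwitz stable if and only if all diagonal entries of Σ are negative and the directed graph on {1,…,d} with an edge (m,n), m≠n, whenever Σ_{nm} ≠ 0, is acyclic. -/
open Matrix

/-!
Forward direction. Let `M` be Metzler, `v ≥ 0` nonzero and `μ • v ≤ M v`. For large `s` the
matrix `B = M + s` is entrywise nonnegative and every eigenvalue `z` of `M` with `Re z < μ`
satisfies `‖z + s‖ < μ + s`. Iterating gives `(μ + s)ᵐ • v ≤ Bᵐ v`, so by Gelfand's formula `B`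
has an eigenvalue of modulus at least `μ + s`, i.e. `M` has one of real part at least `μ`.
Taking `v = eₖ` for `M = P` forces `P k k < 0`. If the digraph of `P` has a cycle through `m`,
let `v` be the indicator of the vertices reachable from `m`: each of them has a reachable
in-neighbour, so the matrix `(if i = j then 1 else 2) * sgn (P i j)` of the sign class, whose
diagonal entries are at least `-1`, satisfies `v ≤ M v` and is not Hurwitz.

Backward direction. An acyclic digraph has a topological order, in which `z - M` is triangular;
hence the eigenvalues of `M` are its diagonal entries, which are negative.
-/

open Filter Topology
open scoped NNReal ENNReal

theorem Relation.exists_injective_lt_of_acyclic {n : Type*} [Fintype n] {r : n → n → Prop}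
    (hr : ∀ m, ¬ Relation.TransGen r m m) :
    ∃ b : n → ℕ ×ₗ Fin (Fintype.card n), Function.Injective b ∧ ∀ x y, r x y → b x < b y := by
  classical
  let height x := (Finset.univ.filter fun j => Relation.TransGen r j x).card
  refine ⟨fun x => toLex (height x, Fintype.equivFin n x), fun x y h => ?_, fun x y hxy => ?_⟩
  · exact (Fintype.equivFin n).injective (Prod.ext_iff.1 (toLex.injective h)).2
  · refine Prod.Lex.left _ _ (Finset.card_lt_card ⟨fun j hj => ?_, fun hsub => ?_⟩)
    · simp only [Finset.mem_filter, Finset.mem_univ, true_and] at hj ⊢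
      exact hj.tail hxy
    · exact hr x (by simpa using hsub (by simpa using Relation.TransGen.single hxy))

theorem Complex.eventually_norm_add_lt {z : ℂ} {μ : ℝ} (hz : z.re < μ) :
    ∀ᶠ s : ℝ in atTop, ‖z + s‖ < μ + s := by
  have hlin : Tendsto (fun s : ℝ => 2 * (μ - z.re) * s + (μ ^ 2 - ‖z‖ ^ 2)) atTop atTop :=
    tendsto_atTop_add_const_right _ _ (tendsto_id.const_mul_atTop (by linarith))
  filter_upwards [hlin.eventually_gt_atTop 0, eventually_gt_atTop (-μ)] with s hs hμs
  have hsq : ‖z + s‖ ^ 2 = ‖z‖ ^ 2 + 2 * z.re * s + s ^ 2 := by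
    simp only [Complex.sq_norm, Complex.normSq_apply, Complex.add_re, Complex.add_im,
      Complex.ofReal_re, Complex.ofReal_im]
    ring
  exact lt_of_pow_lt_pow_left₀ 2 (by linarith) (by nlinarith)

namespace Matrix

section Nonneg
variable {n : Type*} [Fintype n]

lemma map_ofReal_pow [DecidableEq n] (B : Matrix n n ℝ) (m : ℕ) :
    B.map Complex.ofReal ^ m = (B ^ m).map Complex.ofReal :=
  (map_pow Complex.ofRealHom.mapMatrix B m).symm

lemma mulVec_mono_of_nonneg {B : Matrix n n ℝ} (hB : ∀ i j, 0 ≤ B i j) {u w : n → ℝ}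
    (h : u ≤ w) : B *ᵥ u ≤ B *ᵥ w := fun i =>
  Finset.sum_le_sum fun j _ => mul_le_mul_of_nonneg_left (h j) (hB i j)

lemma pow_smul_le_pow_mulVec [DecidableEq n] {B : Matrix n n ℝ} (hB : ∀ i j, 0 ≤ B i j)
    {v : n → ℝ} {r : ℝ} (hr : 0 ≤ r) (hBv : r • v ≤ B *ᵥ v) (m : ℕ) :
    r ^ m • v ≤ B ^ m *ᵥ v := by
  induction m with
  | zero => simp
  | succ m ih =>
    calc r ^ (m + 1) • v = r ^ m • (r • v) := by rw [pow_succ, mul_smul]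
      _ ≤ r ^ m • (B *ᵥ v) := smul_le_smul_of_nonneg_left hBv (pow_nonneg hr m)
      _ = B *ᵥ (r ^ m • v) := (mulVec_smul B _ v).symm
      _ ≤ B *ᵥ (B ^ m *ᵥ v) := mulVec_mono_of_nonneg hB ih
      _ = B ^ (m + 1) *ᵥ v := by rw [mulVec_mulVec, pow_succ']

attribute [local instance] Matrix.linftyOpNormedAddCommGroup Matrix.linftyOpNormedRing
  Matrix.linftyOpNormedAlgebra in
theorem exists_le_norm_mem_spectrum_of_smul_le_mulVec [DecidableEq n] {B : Matrix n n ℝ}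
    (hB : ∀ i j, 0 ≤ B i j) {v : n → ℝ} (hv : 0 ≤ v) (hv0 : v ≠ 0) {r : ℝ} (hr : 0 < r)
    (hBv : r • v ≤ B *ᵥ v) : ∃ z ∈ spectrum ℂ (B.map Complex.ofReal), r ≤ ‖z‖ := by
  by_contra! hlt
  obtain ⟨i, hi⟩ : ∃ i, 0 < v i := by
    by_contra! h
    exact hv0 (funext fun i => le_antisymm (h i) (hv i))
  have : Nonempty n := ⟨i⟩
  set A : Matrix n n ℂ := B.map Complex.ofReal
  have hρ : spectralRadius ℂ A < (r.toNNReal : ℝ≥0∞) :=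
    spectrum.spectralRadius_lt_of_forall_lt A fun z hz => by
      rw [← NNReal.coe_lt_coe, coe_nnnorm, Real.coe_toNNReal _ hr.le]
      exact hlt z hz
  obtain ⟨t, hρt, htr⟩ := ENNReal.lt_iff_exists_nnreal_btwn.1 hρ
  have htr : (t : ℝ) < r := by
    simpa [ENNReal.coe_lt_coe, ← NNReal.coe_lt_coe, hr.le] using htr
  have hnorm : ∀ᶠ m in atTop, ‖A ^ m‖ ≤ t ^ m := by
    filter_upwards [(spectrum.pow_nnnorm_pow_one_div_tendsto_nhds_spectralRadius A).eventually
      (gt_mem_nhds hρt), eventually_ge_atTop 1] with m hm hm1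
    have hm0 : (0 : ℝ) < m := by exact_mod_cast hm1
    rw [one_div, ENNReal.rpow_inv_lt_iff hm0, ENNReal.rpow_natCast] at hm
    exact_mod_cast hm.le
  have hbound : ∀ᶠ m in atTop, r ^ m * v i ≤ t ^ m * ‖v‖ := by
    filter_upwards [hnorm] with m hm
    calc r ^ m * v i ≤ (B ^ m *ᵥ v) i := pow_smul_le_pow_mulVec hB hr.le hBv m i
      _ ≤ ‖B ^ m *ᵥ v‖ := (le_abs_self _).trans (norm_le_pi_norm (B ^ m *ᵥ v) i)
      _ ≤ ‖B ^ m‖ * ‖v‖ := linfty_opNorm_mulVec _ _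
      _ = ‖A ^ m‖ * ‖v‖ := by simp [A, map_ofReal_pow, linfty_opNorm_def]
      _ ≤ t ^ m * ‖v‖ := mul_le_mul_of_nonneg_right hm (norm_nonneg v)
  have hdecay : Tendsto (fun m => (t / r) ^ m * ‖v‖) atTop (𝓝 0) := by
    simpa using (tendsto_pow_atTop_nhds_zero_of_lt_one (by positivity)
      ((div_lt_one hr).2 htr)).mul_const ‖v‖
  obtain ⟨m, hm, hm'⟩ := (hbound.and (hdecay.eventually (gt_mem_nhds hi))).exists
  rw [div_pow, div_mul_eq_mul_div, div_lt_iff₀ (by positivity)] at hm'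
  linarith [mul_comm (v i) (r ^ m)]

end Nonneg

section Acyclic
variable {n : Type*} [Fintype n] {R : Type*}

def digraph [Zero R] (A : Matrix n n R) : Digraph n where
  Adj a b := a ≠ b ∧ A b a ≠ 0

theorem BlockTriangular.det_eq_prod_diag [CommRing R] [DecidableEq n] {α : Type*}
    [LinearOrder α] {A : Matrix n n R} {b : n → α} (hb : Function.Injective b)
    (hA : A.BlockTriangular b) : A.det = ∏ i, A i i := by
  rw [hA.det, Finset.prod_image fun i _ j _ h => hb h]
  refine Finset.prod_congr rfl fun i _ => ?_
  let : Unique {j // b j = b i} := ⟨⟨⟨i, rfl⟩⟩, fun j => Subtype.ext (hb j.2)⟩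
  exact det_unique _

theorem det_eq_prod_diag_of_acyclic [CommRing R] [DecidableEq n] {A : Matrix n n R}
    (hA : ∀ m, ¬ Relation.TransGen A.digraph.Adj m m) : A.det = ∏ i, A i i := by
  obtain ⟨b, hb, hmono⟩ := Relation.exists_injective_lt_of_acyclic hA
  refine BlockTriangular.det_eq_prod_diag (b := OrderDual.toDual ∘ b)
    (OrderDual.toDual.injective.comp hb) fun i j hij => ?_
  by_contra hAij
  exact (hmono j i ⟨fun h => hij.ne (h ▸ rfl), hAij⟩).not_gt hij

end Acyclic

end Matrix

namespace IsMetzler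
variable {d : ℕ} {M : Matrix (Fin d) (Fin d) ℝ}

lemma sum_le_mulVec (hM : IsMetzler M) {v : Fin d → ℝ} (hv : 0 ≤ v) {i : Fin d}
    {s : Finset (Fin d)} (hi : i ∈ s) : ∑ j ∈ s, M i j * v j ≤ (M *ᵥ v) i :=
  Finset.sum_le_sum_of_subset_of_nonneg (Finset.subset_univ s) fun j _ hj =>
    mul_nonneg (hM i j (by rintro rfl; exact hj hi)) (hv j)

theorem exists_le_re_mem_spectrum_of_smul_le_mulVec (hM : IsMetzler M) {v : Fin d → ℝ}
    (hv : 0 ≤ v) (hv0 : v ≠ 0) {μ : ℝ} (hMv : μ • v ≤ M *ᵥ v) :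
    ∃ z ∈ spectrum ℂ (M.map Complex.ofReal), μ ≤ z.re := by
  by_contra! hlt
  have hshift : ∀ᶠ s : ℝ in atTop, (∀ i, 0 ≤ M i i + s) ∧ 0 < μ + s ∧
      ∀ z ∈ spectrum ℂ (M.map Complex.ofReal), ‖z + s‖ < μ + s :=
    (eventually_all.2 fun i => eventually_ge_atTop (-M i i) |>.mono fun s hs => by linarith).and
      ((eventually_gt_atTop (-μ) |>.mono fun s hs => by linarith).and
        ((finite_spectrum _).eventually_all.2 fun z hz =>
          Complex.eventually_norm_add_lt (hlt z hz)))
  obtain ⟨s, hdiag, hμs, hnorm⟩ := hshift.exists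
  have hB : ∀ i j, 0 ≤ (M + s • 1) i j := by
    intro i j
    rcases eq_or_ne i j with rfl | hij
    · simpa [one_apply] using hdiag i
    · simpa [one_apply, hij] using hM i j hij
  have hBv : (μ + s) • v ≤ (M + s • 1) *ᵥ v := by
    rw [add_mulVec, smul_mulVec, one_mulVec, add_smul]
    exact add_le_add_left hMv _
  obtain ⟨w, hw, hle⟩ := Matrix.exists_le_norm_mem_spectrum_of_smul_le_mulVec hB hv hv0 hμs hBv
  have hmap : (M + s • 1).map Complex.ofReal =
      M.map Complex.ofReal + algebraMap ℂ _ (s : ℂ) := by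
    ext i j
    rcases eq_or_ne i j with rfl | h <;> simp [algebraMap_matrix_apply, one_apply, *]
  rw [hmap, ← spectrum.add_singleton_eq] at hw
  obtain ⟨z, hz, _, rfl, rfl⟩ := hw
  exact (hnorm z hz).not_ge hle

lemma exists_diag_le_re_mem_spectrum (hM : IsMetzler M) (k : Fin d) :
    ∃ z ∈ spectrum ℂ (M.map Complex.ofReal), M k k ≤ z.re := by
  refine hM.exists_le_re_mem_spectrum_of_smul_le_mulVec (v := Pi.single k 1)
    (Pi.single_nonneg.2 zero_le_one) (by simp) fun i => ?_
  rcases eq_or_ne i k with rfl | hik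
  · simp
  · simpa [mulVec_single, hik] using hM i k hik

theorem exists_sign_eq_one_le_re_of_transGen {P : Matrix (Fin d) (Fin d) ℝ}
    (hP : IsMetzler P) {m : Fin d} (hm : Relation.TransGen P.digraph.Adj m m) :
    ∃ M : Matrix (Fin d) (Fin d) ℝ, (∀ i j, SignType.sign (M i j) = SignType.sign (P i j)) ∧
      ∃ z ∈ spectrum ℂ (M.map Complex.ofReal), 1 ≤ z.re := by
  classical
  let M : Matrix (Fin d) (Fin d) ℝ := fun i j =>
    (if i = j then 1 else 2) * (SignType.sign (P i j) : ℝ)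
  have hsign : ∀ i j, SignType.sign (M i j) = SignType.sign (P i j) := fun i j => by
    rw [sign_mul, sign_pos (by split_ifs <;> norm_num), one_mul]
    rcases lt_trichotomy (P i j) 0 with h | h | h <;> simp [h]
  have hMetz : IsMetzler M := fun i j hij => by
    simp only [M, if_neg hij]
    rcases (hP i j hij).eq_or_lt with h | h
    · simp [← h]
    · simp [sign_pos h]
  let v : Fin d → ℝ := fun x => if Relation.TransGen P.digraph.Adj m x then 1 else 0
  have hv : 0 ≤ v := fun x => by dsimp [v]; split_ifs <;> norm_num
  refine ⟨M, hsign, hMetz.exists_le_re_mem_spectrum_of_smul_le_mulVec hv ?_ fun i => ?_⟩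
  · intro h
    simpa [v, hm] using congrFun h m
  by_cases hi : Relation.TransGen P.digraph.Adj m i
  · obtain ⟨p, hmp, hpi⟩ := Relation.TransGen.tail'_iff.1 hi
    have hp : v p = 1 := by
      rcases Relation.reflTransGen_iff_eq_or_transGen.1 hmp with rfl | h <;> simp [v, *]
    have hPii : -1 ≤ (SignType.sign (P i i) : ℝ) := by
      rcases lt_trichotomy (P i i) 0 with h | h | h <;> simp [h]
    have hvi : v i = 1 := if_pos hi
    calc (1 : ℝ) • v i = 1 := by simp [hvi]
      _ ≤ M i i * v i + M i p * v p := by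
        simp [M, hvi, hp, hpi.1.symm, sign_pos ((hP i p hpi.1.symm).lt_of_ne' hpi.2)]
        linarith
      _ = ∑ j ∈ {i, p}, M i j * v j :=
        (Finset.sum_pair (f := fun j => M i j * v j) hpi.1.symm).symm
      _ ≤ (M *ᵥ v) i := hMetz.sum_le_mulVec hv (Finset.mem_insert_self i {p})
  · calc (1 : ℝ) • v i = ∑ j ∈ {i}, M i j * v j := by simp [v, hi]
      _ ≤ (M *ᵥ v) i := hMetz.sum_le_mulVec hv (Finset.mem_singleton_self i)

end IsMetzler

theorem isHurwitz_of_sign_eq_of_acyclic {d : ℕ} {P M : Matrix (Fin d) (Fin d) ℝ}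
    (hdiag : ∀ i, P i i < 0) (hacyc : ∀ m, ¬ Relation.TransGen P.digraph.Adj m m)
    (hM : ∀ i j, SignType.sign (M i j) = SignType.sign (P i j)) : IsHurwitz M := by
  intro z hz
  set A := algebraMap ℂ (Matrix (Fin d) (Fin d) ℂ) z - M.map Complex.ofReal
  have hadj : ∀ a b, A.digraph.Adj a b → P.digraph.Adj a b := by
    rintro a b ⟨hab, hA⟩
    refine ⟨hab, fun hP => hA ?_⟩
    have hM0 : M b a = 0 := sign_eq_zero_iff.1 ((hM b a).trans (by rw [hP, sign_zero]))
    simp [A, algebraMap_matrix_apply, Ne.symm hab, hM0]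
  have hdet : ∏ i, A i i = 0 := by
    rw [← det_eq_prod_diag_of_acyclic fun m h => hacyc m (Relation.TransGen.mono hadj m m h)]
    rwa [spectrum.mem_iff, isUnit_iff_isUnit_det, isUnit_iff_ne_zero, not_not] at hz
  obtain ⟨i, -, hi⟩ := Finset.prod_eq_zero_iff.1 hdet
  have hz : z = M i i := by simpa [A, algebraMap_matrix_apply, sub_eq_zero] using hi
  rw [hz, Complex.ofReal_re]
  exact sign_eq_neg_one_iff.1 ((hM i i).trans (sign_eq_neg_one_iff.2 (hdiag i)))

theorem sign_stability_iff_neg_diagonal_acyclic {d : ℕ}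
    (P : Matrix (Fin d) (Fin d) ℝ) (hP : ∀ i j, i ≠ j → 0 ≤ P i j) :
    (∀ M : Matrix (Fin d) (Fin d) ℝ,
        (∀ i j, SignType.sign (M i j) = SignType.sign (P i j)) → IsHurwitz M) ↔
      ((∀ i, P i i < 0) ∧
        ∀ m : Fin d,
          ¬ Relation.TransGen (fun a b : Fin d => a ≠ b ∧ P b a ≠ 0) m m) := by
  constructor
  · intro hstable
    refine ⟨fun k => ?_, fun m hm => ?_⟩
    · obtain ⟨z, hz, hkz⟩ := IsMetzler.exists_diag_le_re_mem_spectrum hP k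
      exact hkz.trans_lt (hstable P (fun _ _ => rfl) z hz)
    · obtain ⟨M, hM, z, hz, hz1⟩ := IsMetzler.exists_sign_eq_one_le_re_of_transGen hP hm
      linarith [hstable M hM z hz]
  · rintro ⟨hdiag, hacyc⟩ M hM
    exact isHurwitz_of_sign_eq_of_acyclic hdiag hacyc hM
end

section
/- Let A and A' be two d×d Metzler matrices with identical zero/nonzero off-diagonal patterns (A_{nm} ≠ 0 ⟺ A'_{nm} ≠ 0 for n ≠ m) and let i ≠ j. Then the system (A, e_i, e_jᵀ) is output controllable if and only if (A', e_i, e_jᵀ) is, i.e., output controllability of a Metzler system with canonical input/output vectors depends only on the sign pattern of the off-diagonal entries. -/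
/-!
Draw an edge `a → b` when `a ≠ b` and `A b a ≠ 0`. For any matrix, `(A ^ k) j i ≠ 0` forces a
path from `i` to `j`, and by Cayley–Hamilton the powers below the dimension already detect every
nonzero `(A ^ k) j i`. Conversely, a Metzler `A` becomes entrywise nonnegative after adding a
large scalar `c`, which changes no edge; for nonnegative `B = A + c • 1` a path of length `k`
gives `(B ^ k) j i > 0`, as no cancellation can occur. Since `A` and `B` are polynomials in each
other, some power of `A` has a nonzero `(j, i)` entry as well. Output controllability is thus
reachability in the pattern graph.
-/

open Matrix

open Polynomial Relation

namespace Matrix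

variable {n R : Type*} [Fintype n] [DecidableEq n]

def PatternAdj [Zero R] (A : Matrix n n R) (a b : n) : Prop :=
  a ≠ b ∧ A b a ≠ 0

theorem patternAdj_add_scalar [Semiring R] (A : Matrix n n R) (c : R) :
    (A + scalar n c).PatternAdj = A.PatternAdj := by
  ext a b
  simp only [PatternAdj, add_apply, scalar_apply]
  exact and_congr_right fun hab => by rw [diagonal_apply_ne _ (Ne.symm hab), add_zero]

theorem reflTransGen_patternAdj_of_pow_apply_ne_zero [Semiring R] (A : Matrix n n R)
    {i j : n} {k : ℕ} (h : (A ^ k) j i ≠ 0) : ReflTransGen A.PatternAdj i j := by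
  induction k generalizing j with
  | zero =>
    obtain rfl : i = j := by_contra fun hij => h (one_apply_ne' hij)
    exact .refl
  | succ k ih =>
    rw [pow_succ', mul_apply] at h
    obtain ⟨m, -, hm⟩ := Finset.exists_ne_zero_of_sum_ne_zero h
    have hpath := ih (right_ne_zero_of_mul hm)
    by_cases hmj : m = j
    · exact hmj ▸ hpath
    · exact hpath.tail ⟨hmj, left_ne_zero_of_mul hm⟩

theorem exists_pow_apply_pos_of_reflTransGen [Semiring R] [PartialOrder R]
    [IsStrictOrderedRing R] {B : Matrix n n R} (hB : ∀ a b, 0 ≤ B a b) {i j : n}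
    (h : ReflTransGen B.PatternAdj i j) : ∃ k, 0 < (B ^ k) j i := by
  induction h with
  | refl => exact ⟨0, by simp⟩
  | @tail m b _ hmb ih =>
    obtain ⟨k, hk⟩ := ih
    refine ⟨k + 1, ?_⟩
    rw [pow_succ', mul_apply]
    calc 0 < B b m * (B ^ k) m i := mul_pos ((hB b m).lt_of_ne' hmb.2) hk
      _ ≤ ∑ l, B b l * (B ^ k) l i :=
        Finset.single_le_sum (fun l _ => mul_nonneg (hB b l) (pow_apply_nonneg hB k l i))
          (Finset.mem_univ m)

theorem exists_pow_apply_ne_zero_of_aeval_apply_ne_zero [CommSemiring R] (A : Matrix n n R)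
    {p : R[X]} {i j : n} (h : aeval A p j i ≠ 0) : ∃ k, (A ^ k) j i ≠ 0 := by
  rw [aeval_eq_sum_range, Matrix.sum_apply] at h
  obtain ⟨k, -, hk⟩ := Finset.exists_ne_zero_of_sum_ne_zero h
  exact ⟨k, fun h0 => hk (by simp [h0])⟩

theorem exists_pow_add_scalar_apply_ne_zero_iff [CommRing R] (A : Matrix n n R) (c : R)
    (i j : n) : (∃ k, ((A + scalar n c) ^ k) j i ≠ 0) ↔ ∃ k, (A ^ k) j i ≠ 0 := by
  have hshift : ∀ (M : Matrix n n R) (c : R), (∃ k, ((M + scalar n c) ^ k) j i ≠ 0) →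
      ∃ k, (M ^ k) j i ≠ 0 := by
    rintro M c ⟨k, hk⟩
    refine M.exists_pow_apply_ne_zero_of_aeval_apply_ne_zero (p := (X + C c) ^ k) ?_
    have haeval : aeval M ((X + C c) ^ k) = (M + scalar n c) ^ k := by
      rw [map_pow, map_add, aeval_X, aeval_C]
      rfl
    rwa [haeval]
  refine ⟨hshift A c, fun h => hshift (A + scalar n c) (-c) ?_⟩
  simpa only [map_neg, add_neg_cancel_right] using h

theorem exists_pow_lt_card_apply_ne_zero_iff [CommRing R] (A : Matrix n n R) (i j : n) :
    (∃ k < Fintype.card n, (A ^ k) j i ≠ 0) ↔ ∃ k, (A ^ k) j i ≠ 0 := by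
  refine ⟨fun ⟨k, _, hk⟩ => ⟨k, hk⟩, fun ⟨k, hk⟩ => ?_⟩
  have : Nontrivial R := nontrivial_of_ne _ _ hk
  have hcard : 0 < Fintype.card n := Fintype.card_pos_iff.mpr ⟨i⟩
  have hdeg : (X ^ k %ₘ A.charpoly).natDegree < Fintype.card n := by
    refine (natDegree_modByMonic_lt _ A.charpoly_monic fun h1 => ?_).trans_eq
      A.charpoly_natDegree_eq_dim
    simp [← A.charpoly_natDegree_eq_dim, h1] at hcard
  rw [pow_eq_aeval_mod_charpoly, aeval_eq_sum_range' hdeg, Matrix.sum_apply] at hk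
  obtain ⟨l, hl, hl0⟩ := Finset.exists_ne_zero_of_sum_ne_zero hk
  exact ⟨l, Finset.mem_range.mp hl, fun h0 => hl0 (by simp [h0])⟩

end Matrix

theorem IsMetzler.exists_nonneg_add_scalar {d : ℕ} {A : Matrix (Fin d) (Fin d) ℝ}
    (hA : IsMetzler A) : ∃ c : ℝ, ∀ a b, 0 ≤ (A + scalar (Fin d) c) a b := by
  refine ⟨∑ m, |A m m|, fun a b => ?_⟩
  rcases eq_or_ne a b with rfl | hab
  · have : |A a a| ≤ ∑ m, |A m m| :=
      Finset.single_le_sum (fun m _ => abs_nonneg (A m m)) (Finset.mem_univ a)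
    simp only [Matrix.add_apply, scalar_apply, diagonal_apply_eq]
    linarith [neg_abs_le (A a a)]
  · simpa only [Matrix.add_apply, scalar_apply, diagonal_apply_ne _ hab, add_zero] using hA a b hab

theorem IsMetzler.exists_pow_apply_ne_zero_iff {d : ℕ} {A : Matrix (Fin d) (Fin d) ℝ}
    (hA : IsMetzler A) (i j : Fin d) :
    (∃ k < d, (A ^ k) j i ≠ 0) ↔ ReflTransGen A.PatternAdj i j := by
  have hcard := A.exists_pow_lt_card_apply_ne_zero_iff i j
  rw [Fintype.card_fin] at hcard
  rw [hcard]
  refine ⟨fun ⟨k, hk⟩ => A.reflTransGen_patternAdj_of_pow_apply_ne_zero hk, fun h => ?_⟩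
  obtain ⟨c, hc⟩ := hA.exists_nonneg_add_scalar
  rw [← A.patternAdj_add_scalar c] at h
  obtain ⟨k, hk⟩ := exists_pow_apply_pos_of_reflTransGen hc h
  exact (A.exists_pow_add_scalar_apply_ne_zero_iff c i j).mp ⟨k, hk.ne'⟩

theorem output_controllability_depends_only_on_pattern_general {d : ℕ}
    (A A' : Matrix (Fin d) (Fin d) ℝ)
    (hA : IsMetzler A) (hA' : IsMetzler A')
    (i j : Fin d)
    (hpat : ∀ m n : Fin d, m ≠ n → (A m n ≠ 0 ↔ A' m n ≠ 0)) :
    (∃ k < d, (Pi.single j (1 : ℝ) ᵥ* (A ^ k)) ⬝ᵥ Pi.single i (1 : ℝ) ≠ 0) ↔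
      (∃ k < d, (Pi.single j (1 : ℝ) ᵥ* (A' ^ k)) ⬝ᵥ Pi.single i (1 : ℝ) ≠ 0) := by
  have hadj : A.PatternAdj = A'.PatternAdj := by
    ext a b
    exact and_congr_right fun hab => hpat b a (Ne.symm hab)
  simp only [single_one_vecMul, dotProduct_single_one, row_apply]
  rw [hA.exists_pow_apply_ne_zero_iff, hA'.exists_pow_apply_ne_zero_iff, hadj]

theorem output_controllability_depends_only_on_pattern {d : ℕ}
    (A A' : Matrix (Fin d) (Fin d) ℝ)
    (hA : IsMetzler A) (hA' : IsMetzler A')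
    (i j : Fin d) (hij : i ≠ j)
    (hpat : ∀ m n : Fin d, m ≠ n → (A m n ≠ 0 ↔ A' m n ≠ 0)) :
    (∃ k < d, (Pi.single j (1 : ℝ) ᵥ* (A ^ k)) ⬝ᵥ Pi.single i (1 : ℝ) ≠ 0) ↔
      (∃ k < d, (Pi.single j (1 : ℝ) ᵥ* (A' ^ k)) ⬝ᵥ Pi.single i (1 : ℝ) ≠ 0) :=
  output_controllability_depends_only_on_pattern_general A A' hA hA' i j hpat
end
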